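/- arXiv:2405.19878 — 4 statements merged into one kernel-verified Lean document; each statement's English description precedes it below -/
import Mathlib

section
/- Let P and P̂ be probability distributions on the finite set S, and let π and π̂ be policies on (S, A). Define joint distributions on S × A by P(s,a) = P(s)·π(a|s) and P̂(s,a) = P̂(s)·π̂(a|s). Then D_TV(P(·,·) ‖ P̂(·,·)) ≤ D_TV(P ‖ P̂) + max_{s∈S} D_TV(π(·|s) ‖ π̂(·|s)). -/
open Finset

/-- Total-variation distance between two functions on a finite type. -/
noncomputable def tv {X : Type*} [Fintype X] (p q : X → ℝ) : ℝ :=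
  (1 / 2) * ∑ x, |p x - q x|

/-- If P, P̂ are distributions on S and π, π̂ are policies, then the TV distance of the
joint distributions is at most the TV distance of the state marginals plus the worst-case
per-state policy TV distance. -/
theorem joint_tv_le_state_tv_add_max_policy_tv
    {S A : Type*} [Fintype S] [Fintype A] [Nonempty S] [Nonempty A]
    (P Phat : S → ℝ) (π πhat : S → A → ℝ)
    (hP : (∀ s, 0 ≤ P s) ∧ ∑ s, P s = 1)
    (hPhat : (∀ s, 0 ≤ Phat s) ∧ ∑ s, Phat s = 1)
    (hπ : ∀ s, (∀ a, 0 ≤ π s a) ∧ ∑ a, π s a = 1)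
    (hπhat : ∀ s, (∀ a, 0 ≤ πhat s a) ∧ ∑ a, πhat s a = 1) :
    tv (fun sa : S × A => P sa.1 * π sa.1 sa.2)
      (fun sa : S × A => Phat sa.1 * πhat sa.1 sa.2)
    ≤ tv P Phat
      + Finset.univ.sup' Finset.univ_nonempty (fun s => tv (π s) (πhat s)) := by
  classical
  set M := Finset.univ.sup' Finset.univ_nonempty (fun s => tv (π s) (πhat s)) with hM
  have hMs : ∀ s : S, tv (π s) (πhat s) ≤ M := fun s => by
    rw [hM]; exact Finset.le_sup' (fun s => tv (π s) (πhat s)) (Finset.mem_univ s)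
  -- per-state bound on the inner sum
  have key : ∀ s : S, ∑ a, |P s * π s a - Phat s * πhat s a|
      ≤ |P s - Phat s| + Phat s * (2 * tv (π s) (πhat s)) := by
    intro s
    have h1 : ∀ a : A, |P s * π s a - Phat s * πhat s a|
        ≤ |P s - Phat s| * π s a + Phat s * |π s a - πhat s a| := by
      intro a
      have : P s * π s a - Phat s * πhat s a
          = (P s - Phat s) * π s a + Phat s * (π s a - πhat s a) := by ring
      rw [this]
      calc |(P s - Phat s) * π s a + Phat s * (π s a - πhat s a)|
          ≤ |(P s - Phat s) * π s a| + |Phat s * (π s a - πhat s a)| := abs_add_le _ _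
        _ = |P s - Phat s| * π s a + Phat s * |π s a - πhat s a| := by
            rw [abs_mul, abs_mul, abs_of_nonneg ((hπ s).1 a), abs_of_nonneg (hPhat.1 s)]
    calc ∑ a, |P s * π s a - Phat s * πhat s a|
        ≤ ∑ a, (|P s - Phat s| * π s a + Phat s * |π s a - πhat s a|) :=
          Finset.sum_le_sum fun a _ => h1 a
      _ = |P s - Phat s| * (∑ a, π s a) + Phat s * ∑ a, |π s a - πhat s a| := by
          rw [Finset.sum_add_distrib, ← Finset.mul_sum, ← Finset.mul_sum]
      _ = |P s - Phat s| + Phat s * (2 * tv (π s) (πhat s)) := by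
          rw [(hπ s).2, mul_one, tv]; ring
  have hsum : ∑ sa : S × A, |P sa.1 * π sa.1 sa.2 - Phat sa.1 * πhat sa.1 sa.2|
      ≤ (∑ s, |P s - Phat s|) + 2 * M := by
    rw [Fintype.sum_prod_type]
    calc ∑ s, ∑ a, |P s * π s a - Phat s * πhat s a|
        ≤ ∑ s, (|P s - Phat s| + Phat s * (2 * tv (π s) (πhat s))) :=
          Finset.sum_le_sum fun s _ => key s
      _ = (∑ s, |P s - Phat s|) + ∑ s, Phat s * (2 * tv (π s) (πhat s)) := by
          rw [Finset.sum_add_distrib]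
      _ ≤ (∑ s, |P s - Phat s|) + ∑ s, Phat s * (2 * M) := by
          gcongr with s
          · exact hPhat.1 s
          · exact hMs s
      _ = (∑ s, |P s - Phat s|) + 2 * M := by
          rw [← Finset.sum_mul, hPhat.2, one_mul]
  show tv _ _ ≤ tv P Phat + M
  rw [tv, tv]
  linarith [hsum]
end

section
/- Let (P_t)_{t≥0} and (P̂_t)_{t≥0} be sequences of probability distributions on S × A generated by kernels K and K̂, i.e., P_{t+1}(s',a') = ∑_{s,a} P_t(s,a)·K(s',a'|s,a) and P̂_{t+1}(s',a') = ∑_{s,a} P̂_t(s,a)·K̂(s',a'|s,a) for all t ≥ 0. Suppose there exists δ ≥ 0 such that for every t ≥ 0, ∑_{s,a} P_t(s,a)·D_TV(K(·,·|s,a) ‖ K̂(·,·|s,a)) ≤ δ. Then for every t ≥ 0, D_TV(P_t ‖ P̂_t) ≤ t·δ + D_TV(P_0 ‖ P̂_0). -/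
open Finset

/-- If two sequences of distributions are generated by kernels whose expected TV distance
is uniformly bounded by δ, then the TV distance at time t grows at most linearly:
D_TV(P_t ‖ P̂_t) ≤ t·δ + D_TV(P_0 ‖ P̂_0). -/
theorem tv_grows_linearly
    {S A : Type*} [Fintype S] [Fintype A] [Nonempty S] [Nonempty A]
    (P Phat : ℕ → S × A → ℝ) (K Khat : S × A → S × A → ℝ) (δ : ℝ)
    (hP : ∀ t, (∀ sa, 0 ≤ P t sa) ∧ ∑ sa, P t sa = 1)
    (hPhat : ∀ t, (∀ sa, 0 ≤ Phat t sa) ∧ ∑ sa, Phat t sa = 1)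
    (hK : ∀ sa, (∀ x, 0 ≤ K sa x) ∧ ∑ x, K sa x = 1)
    (hKhat : ∀ sa, (∀ x, 0 ≤ Khat sa x) ∧ ∑ x, Khat sa x = 1)
    (hPrec : ∀ t (x : S × A), P (t + 1) x = ∑ sa : S × A, P t sa * K sa x)
    (hPhatrec : ∀ t (x : S × A), Phat (t + 1) x = ∑ sa : S × A, Phat t sa * Khat sa x)
    (hδ0 : 0 ≤ δ)
    (hδ : ∀ t, ∑ sa : S × A, P t sa * tv (K sa) (Khat sa) ≤ δ) :
    ∀ t : ℕ, tv (P t) (Phat t) ≤ t * δ + tv (P 0) (Phat 0) := by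
  have step : ∀ t, tv (P (t + 1)) (Phat (t + 1)) ≤
      tv (P t) (Phat t) + ∑ sa : S × A, P t sa * tv (K sa) (Khat sa) := by
    intro t
    have key : ∑ x : S × A, |P (t + 1) x - Phat (t + 1) x| ≤
        ∑ x : S × A, ∑ sa : S × A,
          (P t sa * |K sa x - Khat sa x| + |P t sa - Phat t sa| * Khat sa x) := by
      apply Finset.sum_le_sum
      intro x _
      rw [hPrec, hPhatrec, ← Finset.sum_sub_distrib]
      refine (Finset.abs_sum_le_sum_abs _ _).trans ?_
      apply Finset.sum_le_sum
      intro sa _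
      have : P t sa * K sa x - Phat t sa * Khat sa x
          = P t sa * (K sa x - Khat sa x) + (P t sa - Phat t sa) * Khat sa x := by ring
      rw [this]
      refine (abs_add_le _ _).trans ?_
      rw [abs_mul, abs_mul, abs_of_nonneg ((hP t).1 sa),
        abs_of_nonneg ((hKhat sa).1 x)]
    have key2 : ∑ x : S × A, ∑ sa : S × A,
          (P t sa * |K sa x - Khat sa x| + |P t sa - Phat t sa| * Khat sa x)
        = (∑ sa : S × A, P t sa * ∑ x : S × A, |K sa x - Khat sa x|)
          + ∑ sa : S × A, |P t sa - Phat t sa| := by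
      rw [Finset.sum_comm]
      have h : ∀ sa : S × A, ∑ x : S × A,
          (P t sa * |K sa x - Khat sa x| + |P t sa - Phat t sa| * Khat sa x)
          = P t sa * (∑ x : S × A, |K sa x - Khat sa x|) + |P t sa - Phat t sa| := by
        intro sa
        rw [Finset.sum_add_distrib, ← Finset.mul_sum, ← Finset.mul_sum,
          (hKhat sa).2, mul_one]
      rw [Finset.sum_congr rfl fun sa _ => h sa, Finset.sum_add_distrib]
    unfold tv
    rw [add_comm (1 / 2 * _)]
    calc (1:ℝ)/2 * ∑ x : S × A, |P (t+1) x - Phat (t+1) x|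
        ≤ (1:ℝ)/2 * ((∑ sa : S × A, P t sa * ∑ x : S × A, |K sa x - Khat sa x|)
            + ∑ sa : S × A, |P t sa - Phat t sa|) := by
          rw [← key2]; linarith [key]
      _ = (∑ sa : S × A, P t sa * (1/2 * ∑ x : S × A, |K sa x - Khat sa x|))
            + 1/2 * ∑ sa : S × A, |P t sa - Phat t sa| := by
          rw [mul_add, Finset.mul_sum]
          congr 1
          exact Finset.sum_congr rfl fun sa _ => by ring
      _ = _ := by ring
  intro t
  induction t with
  | zero => simp
  | succ n ih =>
    have h1 := step n
    have h2 := hδ n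
    have : tv (P (n+1)) (Phat (n+1)) ≤ tv (P n) (Phat n) + δ := by linarith
    push_cast
    linarith
end

section
/- Let μ₀ be a probability distribution on S, let π and π̂ be policies on (S, A), and let K and K̂ be kernels from S × A to S × A. Define P_0(s,a) = μ₀(s)·π(a|s), P̂_0(s,a) = μ₀(s)·π̂(a|s), and recursively P_{t+1}(s',a') = ∑_{s,a} P_t(s,a)·K(s',a'|s,a), P̂_{t+1}(s',a') = ∑_{s,a} P̂_t(s,a)·K̂(s',a'|s,a). Suppose there exists δ ≥ 0 such that for every t ≥ 0, ∑_{s,a} P_t(s,a)·D_TV(K(·,·|s,a) ‖ K̂(·,·|s,a)) ≤ δ. Then for every t ≥ 0, D_TV(P_t ‖ P̂_t) ≤ t·δ + max_{s∈S} D_TV(π(·|s) ‖ π̂(·|s)). -/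
open Finset

/-- If the two trajectories start from the same initial state distribution (with two
different policies) and are evolved by kernels whose expected TV distance is uniformly
bounded by δ, then D_TV(P_t ‖ P̂_t) ≤ t·δ + max_s D_TV(π(·|s) ‖ π̂(·|s)). -/
theorem tv_grows_linearly_from_shared_init
    {S A : Type*} [Fintype S] [Fintype A] [Nonempty S] [Nonempty A]
    (μ0 : S → ℝ) (π πhat : S → A → ℝ)
    (P Phat : ℕ → S × A → ℝ) (K Khat : S × A → S × A → ℝ) (δ : ℝ)
    (hμ0 : (∀ s, 0 ≤ μ0 s) ∧ ∑ s, μ0 s = 1)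
    (hπ : ∀ s, (∀ a, 0 ≤ π s a) ∧ ∑ a, π s a = 1)
    (hπhat : ∀ s, (∀ a, 0 ≤ πhat s a) ∧ ∑ a, πhat s a = 1)
    (hK : ∀ sa, (∀ x, 0 ≤ K sa x) ∧ ∑ x, K sa x = 1)
    (hKhat : ∀ sa, (∀ x, 0 ≤ Khat sa x) ∧ ∑ x, Khat sa x = 1)
    (hP0 : ∀ sa : S × A, P 0 sa = μ0 sa.1 * π sa.1 sa.2)
    (hPhat0 : ∀ sa : S × A, Phat 0 sa = μ0 sa.1 * πhat sa.1 sa.2)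
    (hPrec : ∀ t (x : S × A), P (t + 1) x = ∑ sa : S × A, P t sa * K sa x)
    (hPhatrec : ∀ t (x : S × A), Phat (t + 1) x = ∑ sa : S × A, Phat t sa * Khat sa x)
    (hδ0 : 0 ≤ δ)
    (hδ : ∀ t, ∑ sa : S × A, P t sa * tv (K sa) (Khat sa) ≤ δ) :
    ∀ t : ℕ, tv (P t) (Phat t)
      ≤ t * δ + Finset.univ.sup' Finset.univ_nonempty (fun s => tv (π s) (πhat s)) := by
  obtain ⟨hμ0n, hμ0s⟩ := hμ0
  set M := Finset.univ.sup' Finset.univ_nonempty (fun s => tv (π s) (πhat s)) with hM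
  have hMle : ∀ s : S, tv (π s) (πhat s) ≤ M := fun s => by
    rw [hM]; exact Finset.le_sup' (fun s => tv (π s) (πhat s)) (Finset.mem_univ s)
  have hPnn : ∀ t sa, 0 ≤ P t sa := by
    intro t
    induction t with
    | zero =>
        intro sa; rw [hP0]; exact mul_nonneg (hμ0n _) ((hπ _).1 _)
    | succ t ih =>
        intro x; rw [hPrec]
        exact Finset.sum_nonneg fun sa _ => mul_nonneg (ih sa) ((hK sa).1 x)
  intro t
  induction t with
  | zero =>
    have key0 : ∑ sa : S × A, |P 0 sa - Phat 0 sa|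
        = ∑ s, μ0 s * ∑ a, |π s a - πhat s a| := by
      rw [Fintype.sum_prod_type]
      refine Finset.sum_congr rfl fun s _ => ?_
      rw [Finset.mul_sum]
      refine Finset.sum_congr rfl fun a _ => ?_
      rw [hP0, hPhat0, ← mul_sub, abs_mul, abs_of_nonneg (hμ0n s)]
    have hle : tv (P 0) (Phat 0) ≤ M := by
      unfold tv
      rw [key0]
      calc (1/2 : ℝ) * ∑ s, μ0 s * ∑ a, |π s a - πhat s a|
          = ∑ s, μ0 s * tv (π s) (πhat s) := by
            rw [Finset.mul_sum]
            refine Finset.sum_congr rfl fun s _ => ?_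
            unfold tv; ring
        _ ≤ ∑ s, μ0 s * M :=
            Finset.sum_le_sum fun s _ => mul_le_mul_of_nonneg_left (hMle s) (hμ0n s)
        _ = M := by rw [← Finset.sum_mul, hμ0s, one_mul]
    simpa using hle
  | succ t ih =>
    have hb : ∀ x : S × A, |P (t+1) x - Phat (t+1) x|
        ≤ ∑ sa : S × A, (P t sa * |K sa x - Khat sa x| + |P t sa - Phat t sa| * Khat sa x) := by
      intro x
      rw [hPrec, hPhatrec, ← Finset.sum_sub_distrib]
      refine (Finset.abs_sum_le_sum_abs _ _).trans (Finset.sum_le_sum fun sa _ => ?_)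
      have heq : P t sa * K sa x - Phat t sa * Khat sa x
          = P t sa * (K sa x - Khat sa x) + (P t sa - Phat t sa) * Khat sa x := by ring
      rw [heq]
      refine (abs_add_le _ _).trans ?_
      rw [abs_mul, abs_mul, abs_of_nonneg (hPnn t sa), abs_of_nonneg ((hKhat sa).1 x)]
    have hsum : ∑ x : S × A, |P (t+1) x - Phat (t+1) x|
        ≤ 2 * δ + ∑ sa : S × A, |P t sa - Phat t sa| := by
      calc ∑ x : S × A, |P (t+1) x - Phat (t+1) x|
          ≤ ∑ x : S × A, ∑ sa : S × A,
              (P t sa * |K sa x - Khat sa x| + |P t sa - Phat t sa| * Khat sa x) :=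
            Finset.sum_le_sum fun x _ => hb x
        _ = ∑ sa : S × A, (P t sa * ∑ x, |K sa x - Khat sa x|
              + |P t sa - Phat t sa| * ∑ x, Khat sa x) := by
            rw [Finset.sum_comm]
            refine Finset.sum_congr rfl fun sa _ => ?_
            rw [Finset.sum_add_distrib, Finset.mul_sum, Finset.mul_sum]
        _ = ∑ sa : S × A, (P t sa * (2 * tv (K sa) (Khat sa)) + |P t sa - Phat t sa|) := by
            refine Finset.sum_congr rfl fun sa _ => ?_
            rw [(hKhat sa).2, mul_one]
            unfold tv; ring
        _ = 2 * (∑ sa : S × A, P t sa * tv (K sa) (Khat sa))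
              + ∑ sa : S × A, |P t sa - Phat t sa| := by
            rw [Finset.sum_add_distrib, Finset.mul_sum]
            congr 1
            exact Finset.sum_congr rfl fun sa _ => by ring
        _ ≤ 2 * δ + ∑ sa : S × A, |P t sa - Phat t sa| := by
            have := hδ t; linarith
    have step : tv (P (t+1)) (Phat (t+1)) ≤ tv (P t) (Phat t) + δ := by
      unfold tv; linarith
    have : tv (P (t+1)) (Phat (t+1)) ≤ (t * δ + M) + δ := le_trans step (by linarith)
    push_cast
    linarith
end

section
/- Let γ ∈ [0,1), let (P_t)_{t≥0} and (P̂_t)_{t≥0} be sequences of probability distributions on S × A, and let R and R̂ be reward kernels with values in a finite set 𝓡 ⊂ ℝ satisfying |ρ| ≤ r_max, with mean rewards r(s,a) = ∑_{ρ} ρ·R(ρ|s,a) and r̂(s,a) = ∑_{ρ} ρ·R̂(ρ|s,a). Define the discounted returns J = ∑_{t=0}^∞ γ^t ∑_{s,a} P_t(s,a)·r(s,a) and Ĵ = ∑_{t=0}^∞ γ^t ∑_{s,a} P̂_t(s,a)·r̂(s,a). Suppose ε_r ≥ 0 satisfies, for every t ≥ 0, ∑_{s,a} P_t(s,a)·D_TV(R(·|s,a)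 ‖ R̂(·|s,a)) ≤ ε_r. Then |J − Ĵ| ≤ r_max·∑_{t=0}^∞ γ^t·(2·ε_r + 2·D_TV(P_t ‖ P̂_t)). -/
open Finset

/-- Total-variation distance between two functions restricted to a finite set. -/
noncomputable def tvOn {X : Type*} (F : Finset X) (p q : X → ℝ) : ℝ :=
  (1 / 2) * ∑ x ∈ F, |p x - q x|

/-!
Split the one-step gap as `∑ P (r - r̂) + ∑ (P - P̂) r̂`. Since `|ρ| ≤ rmax`, the first term is at
most `2 rmax ∑ P · D_TV(R ‖ R̂) ≤ 2 rmax εr` and the second, as `|r̂| ≤ rmax`, at most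
`2 rmax D_TV(P ‖ P̂)`. All returns are bounded by `rmax`, so the discounted series converge and the
one-step bounds can be summed.
-/

section FiniteSums

variable {X : Type*} {F : Finset X} {p q f g : X → ℝ} {M : ℝ}

theorem abs_sum_mul_le_sum_mul (hp : ∀ x ∈ F, 0 ≤ p x) (hf : ∀ x ∈ F, |f x| ≤ g x) :
    |∑ x ∈ F, p x * f x| ≤ ∑ x ∈ F, p x * g x :=
  (abs_sum_le_sum_abs _ _).trans <| sum_le_sum fun x hx => by
    rw [abs_mul, abs_of_nonneg (hp x hx)]
    exact mul_le_mul_of_nonneg_left (hf x hx) (hp x hx)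

theorem abs_sum_mul_le_of_sum_eq_one (hp : ∀ x ∈ F, 0 ≤ p x) (hp1 : ∑ x ∈ F, p x = 1)
    (hf : ∀ x ∈ F, |f x| ≤ M) : |∑ x ∈ F, p x * f x| ≤ M :=
  (abs_sum_mul_le_sum_mul hp hf).trans_eq (by rw [← sum_mul, hp1, one_mul])

theorem abs_sum_mul_sub_sum_mul_le_tvOn (hf : ∀ x ∈ F, |f x| ≤ M) :
    |∑ x ∈ F, p x * f x - ∑ x ∈ F, q x * f x| ≤ 2 * M * tvOn F p q := by
  rw [← sum_sub_distrib, tvOn]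
  calc |∑ x ∈ F, (p x * f x - q x * f x)| ≤ ∑ x ∈ F, |p x - q x| * M :=
        (abs_sum_le_sum_abs _ _).trans <| sum_le_sum fun x hx => by
          rw [← sub_mul, abs_mul]
          exact mul_le_mul_of_nonneg_left (hf x hx) (abs_nonneg _)
    _ = 2 * M * (1 / 2 * ∑ x ∈ F, |p x - q x|) := by rw [← sum_mul]; ring

theorem tv_nonneg [Fintype X] (p q : X → ℝ) : 0 ≤ tv p q := by
  unfold tv; positivity

theorem tv_le_one [Fintype X] (hp : ∀ x, 0 ≤ p x) (hp1 : ∑ x, p x = 1)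
    (hq : ∀ x, 0 ≤ q x) (hq1 : ∑ x, q x = 1) : tv p q ≤ 1 := by
  have : ∑ x, |p x - q x| ≤ ∑ x, (p x + q x) := sum_le_sum fun x _ =>
    (abs_sub _ _).trans_eq (by rw [abs_of_nonneg (hp x), abs_of_nonneg (hq x)])
  rw [sum_add_distrib, hp1, hq1] at this
  unfold tv; linarith

end FiniteSums

theorem abs_tsum_sub_tsum_le {f g h : ℕ → ℝ} (hf : Summable f) (hg : Summable g)
    (hh : Summable h) (hle : ∀ t, |f t - g t| ≤ h t) : |∑' t, f t - ∑' t, g t| ≤ ∑' t, h t := by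
  rw [← hf.tsum_sub hg]
  exact tsum_of_norm_bounded (f := fun t => f t - g t) hh.hasSum hle

theorem summable_pow_mul_of_abs_le {γ : ℝ} (hγ0 : 0 ≤ γ) (hγ1 : γ < 1) {u : ℕ → ℝ} {M : ℝ}
    (hu : ∀ t, |u t| ≤ M) : Summable fun t => γ ^ t * u t :=
  ((summable_geometric_of_lt_one hγ0 hγ1).mul_right M).of_norm_bounded fun t => by
    rw [Real.norm_eq_abs, abs_mul, abs_of_nonneg (pow_nonneg hγ0 t)]
    exact mul_le_mul_of_nonneg_left (hu t) (pow_nonneg hγ0 t)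

theorem abs_tsum_pow_mul_sub_le {γ : ℝ} (hγ0 : 0 ≤ γ) (hγ1 : γ < 1) {a b c : ℕ → ℝ} {M : ℝ}
    (ha : ∀ t, |a t| ≤ M) (hb : ∀ t, |b t| ≤ M) (hc : Summable fun t => γ ^ t * c t)
    (habc : ∀ t, |a t - b t| ≤ c t) :
    |∑' t, γ ^ t * a t - ∑' t, γ ^ t * b t| ≤ ∑' t, γ ^ t * c t :=
  abs_tsum_sub_tsum_le (summable_pow_mul_of_abs_le hγ0 hγ1 ha)
    (summable_pow_mul_of_abs_le hγ0 hγ1 hb) hc fun t => by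
      rw [← mul_sub, abs_mul, abs_of_nonneg (pow_nonneg hγ0 t)]
      exact mul_le_mul_of_nonneg_left (habc t) (pow_nonneg hγ0 t)

section Rewards

variable {Rset : Finset ℝ} {rmax : ℝ}

theorem abs_meanReward_le (hbound : ∀ ρ ∈ Rset, |ρ| ≤ rmax) {p : ℝ → ℝ}
    (hp : ∀ ρ ∈ Rset, 0 ≤ p ρ) (hp1 : ∑ ρ ∈ Rset, p ρ = 1) : |∑ ρ ∈ Rset, ρ * p ρ| ≤ rmax := by
  simpa only [mul_comm] using abs_sum_mul_le_of_sum_eq_one hp hp1 hbound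

theorem abs_expectedReward_le {X : Type*} [Fintype X] (hbound : ∀ ρ ∈ Rset, |ρ| ≤ rmax)
    {R : X → ℝ → ℝ} (hR : ∀ x, (∀ ρ ∈ Rset, 0 ≤ R x ρ) ∧ ∑ ρ ∈ Rset, R x ρ = 1) {p : X → ℝ}
    (hp : ∀ x, 0 ≤ p x) (hp1 : ∑ x, p x = 1) : |∑ x, p x * ∑ ρ ∈ Rset, ρ * R x ρ| ≤ rmax :=
  abs_sum_mul_le_of_sum_eq_one (fun x _ => hp x) hp1 fun x _ =>
    abs_meanReward_le hbound (hR x).1 (hR x).2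

theorem abs_expectedReward_sub_le {X : Type*} [Fintype X] {p q : X → ℝ} (hp : ∀ x, 0 ≤ p x)
    (hbound : ∀ ρ ∈ Rset, |ρ| ≤ rmax) {R Rhat : X → ℝ → ℝ}
    (hrhat : ∀ x, |∑ ρ ∈ Rset, ρ * Rhat x ρ| ≤ rmax) :
    |∑ x, p x * ∑ ρ ∈ Rset, ρ * R x ρ - ∑ x, q x * ∑ ρ ∈ Rset, ρ * Rhat x ρ|
      ≤ rmax * (2 * ∑ x, p x * tvOn Rset (R x) (Rhat x) + 2 * tv p q) := by
  have hreward : |∑ x, p x * (∑ ρ ∈ Rset, ρ * R x ρ - ∑ ρ ∈ Rset, ρ * Rhat x ρ)|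
      ≤ 2 * rmax * ∑ x, p x * tvOn Rset (R x) (Rhat x) := by
    rw [mul_sum]
    refine (abs_sum_mul_le_sum_mul (g := fun x => 2 * rmax * tvOn Rset (R x) (Rhat x))
      (fun x _ => hp x) fun x _ => ?_).trans_eq (sum_congr rfl fun x _ => by ring)
    simp only [mul_comm _ (R x _), mul_comm _ (Rhat x _)]
    exact abs_sum_mul_sub_sum_mul_le_tvOn hbound
  have hstate := abs_sum_mul_sub_sum_mul_le_tvOn (F := univ) (p := p) (q := q)
    fun x _ => hrhat x
  calc _ = |∑ x, p x * (∑ ρ ∈ Rset, ρ * R x ρ - ∑ ρ ∈ Rset, ρ * Rhat x ρ)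
          + (∑ x, p x * ∑ ρ ∈ Rset, ρ * Rhat x ρ - ∑ x, q x * ∑ ρ ∈ Rset, ρ * Rhat x ρ)| := by
        simp only [mul_sub, sum_sub_distrib]; ring_nf
    _ ≤ _ := (abs_add_le _ _).trans (add_le_add hreward hstate)
    _ = _ := by rw [tv, tvOn]; ring

end Rewards

theorem return_gap_le_discounted_errors_general
    {S A : Type*} [Fintype S] [Fintype A] [Nonempty S] [Nonempty A]
    (γ : ℝ) (hγ0 : 0 ≤ γ) (hγ1 : γ < 1)
    (P Phat : ℕ → S × A → ℝ)
    (hP : ∀ t, (∀ sa, 0 ≤ P t sa) ∧ ∑ sa, P t sa = 1)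
    (hPhat : ∀ t, (∀ sa, 0 ≤ Phat t sa) ∧ ∑ sa, Phat t sa = 1)
    (Rset : Finset ℝ) (rmax : ℝ)
    (hbound : ∀ ρ ∈ Rset, |ρ| ≤ rmax)
    (R Rhat : S × A → ℝ → ℝ)
    (hR : ∀ sa, (∀ ρ ∈ Rset, 0 ≤ R sa ρ) ∧ ∑ ρ ∈ Rset, R sa ρ = 1)
    (hRhat : ∀ sa, (∀ ρ ∈ Rset, 0 ≤ Rhat sa ρ) ∧ ∑ ρ ∈ Rset, Rhat sa ρ = 1)
    (εr : ℝ)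
    (hεr : ∀ t, ∑ sa : S × A, P t sa * tvOn Rset (R sa) (Rhat sa) ≤ εr) :
    |(∑' t : ℕ, γ ^ t * ∑ sa : S × A, P t sa * ∑ ρ ∈ Rset, ρ * R sa ρ)
       - ∑' t : ℕ, γ ^ t * ∑ sa : S × A, Phat t sa * ∑ ρ ∈ Rset, ρ * Rhat sa ρ|
      ≤ rmax * ∑' t : ℕ, γ ^ t * (2 * εr + 2 * tv (P t) (Phat t)) := by
  have hrmax : 0 ≤ rmax :=
    (abs_nonneg _).trans (abs_meanReward_le hbound (hR (Classical.arbitrary _)).1 (hR _).2)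
  have hstep : ∀ t, |∑ sa, P t sa * ∑ ρ ∈ Rset, ρ * R sa ρ
      - ∑ sa, Phat t sa * ∑ ρ ∈ Rset, ρ * Rhat sa ρ| ≤ rmax * (2 * εr + 2 * tv (P t) (Phat t)) :=
    fun t => (abs_expectedReward_sub_le (hP t).1 hbound
      fun sa => abs_meanReward_le hbound (hRhat sa).1 (hRhat sa).2).trans (by gcongr; exact hεr t)
  have herrors : Summable fun t => γ ^ t * (2 * εr + 2 * tv (P t) (Phat t)) :=
    summable_pow_mul_of_abs_le hγ0 hγ1 (M := 2 * |εr| + 2) fun t => by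
      have := tv_le_one (hP t).1 (hP t).2 (hPhat t).1 (hPhat t).2
      have := tv_nonneg (P t) (Phat t)
      exact abs_le.mpr ⟨by linarith [neg_abs_le εr], by linarith [le_abs_self εr]⟩
  calc _ ≤ ∑' t, γ ^ t * (rmax * (2 * εr + 2 * tv (P t) (Phat t))) :=
        abs_tsum_pow_mul_sub_le hγ0 hγ1
          (fun t => abs_expectedReward_le hbound hR (hP t).1 (hP t).2)
          (fun t => abs_expectedReward_le hbound hRhat (hPhat t).1 (hPhat t).2)
          (by simpa only [mul_left_comm] using herrors.mul_left rmax) hstep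
    _ = _ := by simp_rw [mul_left_comm _ rmax]; exact tsum_mul_left

/-- Return-gap decomposition: the gap between the two discounted returns is bounded by the
discounted sum of reward-kernel errors and TV distances of the state-action distributions. -/
theorem return_gap_le_discounted_errors
    {S A : Type*} [Fintype S] [Fintype A] [Nonempty S] [Nonempty A]
    (γ : ℝ) (hγ0 : 0 ≤ γ) (hγ1 : γ < 1)
    (P Phat : ℕ → S × A → ℝ)
    (hP : ∀ t, (∀ sa, 0 ≤ P t sa) ∧ ∑ sa, P t sa = 1)
    (hPhat : ∀ t, (∀ sa, 0 ≤ Phat t sa) ∧ ∑ sa, Phat t sa = 1)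
    (Rset : Finset ℝ) (rmax : ℝ)
    (hbound : ∀ ρ ∈ Rset, |ρ| ≤ rmax)
    (R Rhat : S × A → ℝ → ℝ)
    (hR : ∀ sa, (∀ ρ ∈ Rset, 0 ≤ R sa ρ) ∧ ∑ ρ ∈ Rset, R sa ρ = 1)
    (hRhat : ∀ sa, (∀ ρ ∈ Rset, 0 ≤ Rhat sa ρ) ∧ ∑ ρ ∈ Rset, Rhat sa ρ = 1)
    (εr : ℝ) (hεr0 : 0 ≤ εr)
    (hεr : ∀ t, ∑ sa : S × A, P t sa * tvOn Rset (R sa) (Rhat sa) ≤ εr) :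
    |(∑' t : ℕ, γ ^ t * ∑ sa : S × A, P t sa * ∑ ρ ∈ Rset, ρ * R sa ρ)
       - ∑' t : ℕ, γ ^ t * ∑ sa : S × A, Phat t sa * ∑ ρ ∈ Rset, ρ * Rhat sa ρ|
      ≤ rmax * ∑' t : ℕ, γ ^ t * (2 * εr + 2 * tv (P t) (Phat t)) :=
  return_gap_le_discounted_errors_general γ hγ0 hγ1 P Phat hP hPhat Rset rmax hbound R Rhat hR hRhat
    εr hεr
end
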